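/- Let B be a 0-priority finite automaton under the ordering γ₁,...,γₗ, with Acycᵢ the set of 0-cyclic (γᵢ,0)-acyclic states (1 ≤ i ≤ l) and Acyc_{l+1} the set of 0-cyclic states not in any Acycᵢ. If q ∈ Acycᵢ and δ(q,(γᵢ,0)) = q', then q' ∉ Acycᵢ and q' ∈ Acycⱼ for some j > i (where j may equal l+1). -/
import Mathlib


/-- One zero-transition step in the transition graph `G₀`:
there is an arc from `q` to `q'` labeled `(γ, 0)` for some `γ`. -/
def Step0 {Q Γ : Type} (δ : Q → Γ × Bool → Q) (q q' : Q) : Prop :=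
  ∃ γ : Γ, δ q (γ, false) = q'

/-- Reachability in `G₀`. -/
def Reach0 {Q Γ : Type} (δ : Q → Γ × Bool → Q) : Q → Q → Prop :=
  Relation.ReflTransGen (Step0 δ)

/-- `q` lies on a nontrivial cycle of `G₀`. -/
def ZeroCyclic {Q Γ : Type} (δ : Q → Γ × Bool → Q) (q : Q) : Prop :=
  ∃ q', Step0 δ q q' ∧ Reach0 δ q' q

/-- `q` lies on a cycle of the graph `G_{(γ,0)}` of `(γ,0)`-arcs. -/
def GammaCyclic {Q Γ : Type} (δ : Q → Γ × Bool → Q) (γ : Γ) (q : Q) : Prop :=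
  ∃ n : ℕ, 1 ≤ n ∧ (fun p => δ p (γ, false))^[n] q = q

/-- A `((γ₁,0),(γ₂,0))`-pattern: states `q₁ q₂ q₃ q₄` with
`δ(q₁,(γ₁,0)) = q₂`, `q₃` reachable from `q₂` in `G₀`, `δ(q₃,(γ₂,0)) = q₄`,
`q₁` 0-cyclic and `q₃` `(γ₂,0)`-acyclic. -/
def Pattern {Q Γ : Type} (δ : Q → Γ × Bool → Q) (γ₁ γ₂ : Γ) : Prop :=
  ∃ q₁ q₂ q₃ q₄ : Q,
    δ q₁ (γ₁, false) = q₂ ∧ Reach0 δ q₂ q₃ ∧ δ q₃ (γ₂, false) = q₄ ∧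
    ZeroCyclic δ q₁ ∧ ¬ GammaCyclic δ γ₂ q₃

/-- `B` is a 0-priority finite automaton: the letters can be linearly ordered
so that there is no `((γᵢ,0),(γⱼ,0))`-pattern with `i ≥ j`. -/
def ZeroPriority {Q Γ : Type} (δ : Q → Γ × Bool → Q) : Prop :=
  ∃ ord : Γ → ℕ, Function.Injective ord ∧
    ∀ γ γ' : Γ, ord γ' ≤ ord γ → ¬ Pattern δ γ γ'

lemma reach0_iterate {Q Γ : Type} (δ : Q → Γ × Bool → Q) (γ : Γ) (m : ℕ) (x : Q) :
    Reach0 δ x ((fun p => δ p (γ, false))^[m] x) := by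
  induction m generalizing x with
  | zero => exact Relation.ReflTransGen.refl
  | succ n ih =>
    rw [Function.iterate_succ_apply]
    exact Relation.ReflTransGen.head ⟨γ, rfl⟩ (ih _)

lemma zeroCyclic_of_gammaCyclic {Q Γ : Type} (δ : Q → Γ × Bool → Q) (γ : Γ) (q : Q)
    (h : GammaCyclic δ γ q) : ZeroCyclic δ q := by
  obtain ⟨n, hn, hq⟩ := h
  refine ⟨δ q (γ, false), ⟨γ, rfl⟩, ?_⟩
  have := reach0_iterate δ γ (n - 1) (δ q (γ, false))
  rwa [← Function.iterate_succ_apply, Nat.succ_eq_add_one, Nat.sub_add_cancel hn, hq] at this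

/-- With `Acyc i` the set of 0-cyclic `(e i,0)`-acyclic states and
`AcycTop` the 0-cyclic states in no `Acyc i`: if `q ∈ Acyc i` and
`δ(q,(e i,0)) = q'`, then `q' ∉ Acyc i` and `q'` belongs to `Acyc j` for some
`j > i`, where `j` may be `l + 1` (i.e. `q' ∈ AcycTop`). -/
theorem acyc_step_increases {Q Γ : Type} [Fintype Q] {l : ℕ}
    (δ : Q → Γ × Bool → Q) (e : Fin l ≃ Γ)
    (hord : ∀ i j : Fin l, j ≤ i → ¬ Pattern δ (e i) (e j))
    (i : Fin l) (q q' : Q)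
    (hq : ZeroCyclic δ q ∧ ¬ GammaCyclic δ (e i) q)
    (hstep : δ q (e i, false) = q') :
    ¬ (ZeroCyclic δ q' ∧ ¬ GammaCyclic δ (e i) q') ∧
    ((∃ j : Fin l, i < j ∧ ZeroCyclic δ q' ∧ ¬ GammaCyclic δ (e j) q') ∨
      (ZeroCyclic δ q' ∧ ∀ j : Fin l, GammaCyclic δ (e j) q')) := by
  obtain ⟨hqc, hqac⟩ := hq
  have hgc : GammaCyclic δ (e i) q' := by
    by_contra h
    exact hord i i le_rfl ⟨q, q', q', _, hstep, Relation.ReflTransGen.refl, rfl, hqc, h⟩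
  have hzc : ZeroCyclic δ q' := zeroCyclic_of_gammaCyclic δ _ _ hgc
  refine ⟨fun h => h.2 hgc, ?_⟩
  by_cases hall : ∀ j : Fin l, GammaCyclic δ (e j) q'
  · exact Or.inr ⟨hzc, hall⟩
  · push_neg at hall
    obtain ⟨j, hj⟩ := hall
    refine Or.inl ⟨j, ?_, hzc, hj⟩
    by_contra hle
    push_neg at hle
    exact hord i j hle ⟨q, q', q', _, hstep, Relation.ReflTransGen.refl, rfl, hqc, hj⟩
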